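/- Let (a_n)_{n≥1} be a sequence of positive real numbers such that the series ∑_{n=1}^∞ a_n diverges. Then for every natural number m, the series ∑_{n=1}^∞ a_n^{1 + m/n} also diverges. -/

import Mathlib

/-!
For `x ≥ 0` and `e > 0`, either `x ^ e ≥ 1/2`, and then `x ≤ 2 x ^ (1 + e)`, or `x ^ e < 1/2`, and
then `x < (1/2) ^ (1/e)`. Hence `a_n ≤ 2 a_n ^ (1 + m/n) + (1/2) ^ (n/m)`, and the last term is
geometric in `n`; so summability of `a_n ^ (1 + m/n)` would force summability of `a_n`.
-/

theorem le_two_mul_rpow_one_add_add_half_rpow_inv {x e : ℝ} (hx : 0 ≤ x) (he : 0 < e) :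
    x ≤ 2 * x ^ (1 + e) + (1 / 2) ^ e⁻¹ := by
  rcases le_or_gt (1 / 2) (x ^ e) with hbig | hsmall
  · have hsplit : x ^ (1 + e) = x * x ^ e := by
      rw [Real.rpow_add' hx (by positivity), Real.rpow_one]
    have : 0 ≤ (1 / 2 : ℝ) ^ e⁻¹ := by positivity
    nlinarith
  · calc x = (x ^ e) ^ e⁻¹ := (Real.rpow_rpow_inv hx he.ne').symm
      _ ≤ (1 / 2) ^ e⁻¹ := Real.rpow_le_rpow (by positivity) hsmall.le (by positivity)
      _ ≤ 2 * x ^ (1 + e) + (1 / 2) ^ e⁻¹ := le_add_of_nonneg_left (by positivity)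

theorem not_summable_rpow_one_add {a e : ℕ → ℝ} (ha : ∀ n, 0 ≤ a n) (he : ∀ n, 0 < e n)
    (hhalf : Summable fun n => (1 / 2 : ℝ) ^ (e n)⁻¹) (hdiv : ¬Summable a) :
    ¬Summable fun n => a n ^ (1 + e n) := fun hs =>
  hdiv <| ((hs.mul_left 2).add hhalf).of_nonneg_of_le ha
    fun n => le_two_mul_rpow_one_add_add_half_rpow_inv (ha n) (he n)

theorem summable_rpow_mul_natCast {c t : ℝ} (hc0 : 0 ≤ c) (hc1 : c < 1) (ht : 0 < t) :
    Summable fun n : ℕ => c ^ (t * n) := by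
  simp_rw [Real.rpow_mul_natCast hc0]
  exact summable_geometric_of_lt_one (by positivity) (Real.rpow_lt_one hc0 hc1 ht)

/-- If `(a_n)_{n ≥ 1}` is a sequence of positive reals whose series diverges,
then for every natural number `m` the series `∑_{n ≥ 1} a_n^{1 + m/n}` also
diverges.  (The index `n ≥ 1` is encoded by evaluating at `n + 1`.) -/
theorem summable_rpow_shifted_of_not_summable (a : ℕ → ℝ)
    (hpos : ∀ n : ℕ, 1 ≤ n → 0 < a n)
    (hdiv : ¬ Summable (fun n : ℕ => a (n + 1))) (m : ℕ) :
    ¬ Summable (fun n : ℕ => a (n + 1) ^ ((1 : ℝ) + (m : ℝ) / ((n : ℝ) + 1))) := by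
  rcases Nat.eq_zero_or_pos m with rfl | hm
  · simpa using hdiv
  have hm' : (0 : ℝ) < m := by exact_mod_cast hm
  refine not_summable_rpow_one_add (fun n => (hpos (n + 1) n.succ_pos).le)
    (fun n => by positivity) ?_ hdiv
  have hgeo := (summable_nat_add_iff 1).mpr
    (summable_rpow_mul_natCast (c := 1 / 2) (by norm_num) (by norm_num) (inv_pos.mpr hm'))
  refine hgeo.congr fun n => ?_
  rw [Nat.cast_add_one, inv_div, inv_mul_eq_div]
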